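/- arXiv:2103.11451 — 8 statements merged into one kernel-verified Lean document; each statement's English description precedes it below -/
import Mathlib

section
/- Let α, β ∈ PSL(2,ℂ) be two distinct elements of order 2 that commute. Then for any lifts α̃, β̃ of α, β to SL(2,ℂ), the commutator [α̃, β̃] equals −Id. -/
abbrev SL2C := Matrix.SpecialLinearGroup (Fin 2) ℂ
abbrev PSL2C := SL2C ⧸ Subgroup.center SL2C

instance : Fact (Even (Fintype.card (Fin 2))) := ⟨by norm_num⟩

/-!
The center of `SL(2, ℂ)` is `{±1}`, and `±1` are the only square roots of `1` there. Hence a lift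
`A` of an involution of `PSL(2, ℂ)` satisfies `A ^ 2 = -1`, and the commutator of lifts of commuting
elements is `±1`. If it were `1`, then `(A * B) ^ 2 = A ^ 2 * B ^ 2 = 1`, so `A * B = ±1` and
`B = ±A⁻¹ = ∓A`, i.e. `A` and `B` would project to the same element of `PSL(2, ℂ)`.
-/

open scoped MatrixGroups commutatorElement

theorem eq_zero_of_neg_eq_self {R : Type*} [Ring R] [NoZeroDivisors R] [NeZero (2 : R)] {a : R}
    (h : -a = a) : a = 0 :=
  (mul_eq_zero.mp ((two_mul a).trans (neg_eq_iff_add_eq_zero.mp h))).resolve_left two_ne_zero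

theorem QuotientGroup.commutatorElement_mem_of_commute_mk {G : Type*} [Group G]
    {N : Subgroup G} [N.Normal] {a b : G} (h : Commute (a : G ⧸ N) b) : ⁅a, b⁆ ∈ N :=
  (QuotientGroup.eq_one_iff _).mp <|
    (map_commutatorElement (QuotientGroup.mk' N) a b).trans (commutatorElement_eq_one_iff_commute.mpr h)

namespace Matrix.SpecialLinearGroup

variable {R : Type*} [CommRing R]

theorem neg_one_mem_center : (-1 : SL(2, R)) ∈ Subgroup.center SL(2, R) :=
  Subgroup.mem_center_iff.mpr fun B => by simp

theorem mk_neg (A : SL(2, R)) :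
    (QuotientGroup.mk (-A) : SL(2, R) ⧸ Subgroup.center SL(2, R)) = QuotientGroup.mk A := by
  rw [← mul_neg_one]
  exact QuotientGroup.mk_mul_of_mem A neg_one_mem_center

variable [NoZeroDivisors R]

theorem eq_one_or_eq_neg_one_of_mem_center {A : SL(2, R)}
    (hA : A ∈ Subgroup.center SL(2, R)) : A = 1 ∨ A = -1 := by
  obtain ⟨r, hr, hrA⟩ := mem_center_iff.mp hA
  rcases sq_eq_one_iff.mp hr with rfl | rfl
  · exact .inl (Subtype.ext (by rw [← hrA, map_one, coe_one]))
  · exact .inr (Subtype.ext (by rw [← hrA, map_neg, map_one, coe_neg, coe_one]))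

variable [NeZero (2 : R)]

theorem eq_one_or_eq_neg_one_of_sq_eq_one {A : SL(2, R)} (h : A ^ 2 = 1) :
    A = 1 ∨ A = -1 := by
  -- `A⁻¹` is the adjugate of `A`, so `A⁻¹ = A` forces `A` to be scalar.
  have hinv : A⁻¹ = A := inv_eq_of_mul_eq_one_right (by rw [← sq, h])
  have entry (i j : Fin 2) := congrArg (fun M : SL(2, R) => M.1 i j) hinv
  have hb : A 0 1 = 0 := eq_zero_of_neg_eq_self (by simpa [SL2_inv_expl] using entry 0 1)
  have hc : A 1 0 = 0 := eq_zero_of_neg_eq_self (by simpa [SL2_inv_expl] using entry 1 0)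
  have hd : A 1 1 = A 0 0 := by simpa [SL2_inv_expl] using (entry 1 1).symm
  have hscalar : (A : Matrix (Fin 2) (Fin 2) R) = scalar (Fin 2) (A 0 0) := by
    rw [eta_fin_two A.1, hb, hc, hd]
    ext i j
    fin_cases i <;> fin_cases j <;> rfl
  refine eq_one_or_eq_neg_one_of_mem_center (Subgroup.mem_center_iff.mpr fun B => ?_)
  refine Subtype.ext ?_
  rw [coe_mul, coe_mul, hscalar]
  exact (scalar_commute (A 0 0) (Commute.all (A 0 0)) B.1).symm

theorem sq_eq_neg_one_of_orderOf_mk_eq_two {A : SL(2, R)}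
    (hA : orderOf (A : SL(2, R) ⧸ Subgroup.center SL(2, R)) = 2) : A ^ 2 = -1 := by
  have hsq : A ^ 2 ∈ Subgroup.center SL(2, R) :=
    (QuotientGroup.eq_one_iff _).mp (by rw [QuotientGroup.mk_pow, ← orderOf_dvd_iff_pow_eq_one, hA])
  refine (eq_one_or_eq_neg_one_of_mem_center hsq).resolve_left fun h => ?_
  rcases eq_one_or_eq_neg_one_of_sq_eq_one h with rfl | rfl
  · simp at hA
  · rw [(QuotientGroup.eq_one_iff _).mpr neg_one_mem_center, orderOf_one] at hA
    exact absurd hA (by norm_num)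

theorem eq_or_eq_neg_of_commute_of_sq_eq_neg_one {A B : SL(2, R)} (hA : A ^ 2 = -1)
    (hB : B ^ 2 = -1) (hAB : Commute A B) : B = A ∨ B = -A := by
  have hprod : (A * B) ^ 2 = 1 := by rw [hAB.mul_pow, hA, hB, neg_one_mul, neg_neg]
  rw [sq] at hA
  rcases eq_one_or_eq_neg_one_of_sq_eq_one hprod with h | h
  · exact .inr (mul_left_cancel (a := A) (by rw [h, mul_neg, hA, neg_neg]))
  · exact .inl (mul_left_cancel (a := A) (by rw [h, hA]))

end Matrix.SpecialLinearGroup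

open Matrix.SpecialLinearGroup in
theorem commutator_of_lifts_eq_neg_one
    (α β : PSL2C) (hne : α ≠ β)
    (hα : orderOf α = 2) (hβ : orderOf β = 2) (hcomm : Commute α β)
    (A B : SL2C)
    (hA : (QuotientGroup.mk A : PSL2C) = α)
    (hB : (QuotientGroup.mk B : PSL2C) = β) :
    ⁅A, B⁆ = (-1 : SL2C) := by
  subst hA hB
  have hA2 := sq_eq_neg_one_of_orderOf_mk_eq_two hα
  have hB2 := sq_eq_neg_one_of_orderOf_mk_eq_two hβ
  refine (eq_one_or_eq_neg_one_of_mem_center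
    (QuotientGroup.commutatorElement_mem_of_commute_mk hcomm)).resolve_left fun h => hne ?_
  rcases eq_or_eq_neg_of_commute_of_sq_eq_neg_one hA2 hB2
    (commutatorElement_eq_one_iff_commute.mp h) with rfl | rfl
  · rfl
  · exact (mk_neg A).symm
end

section
/- Let p ≠ q ∈ {1,...,5} and α, β ∈ A₅. Suppose α fixes p but not q, and β fixes q but not p. Then βα does not fix p, does not fix q, and does not interchange p and q. -/
open Equiv

theorem beta_mul_alpha_not_fix_nor_interchange
    (p q : Fin 5) (hpq : p ≠ q) (α β : Perm (Fin 5))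
    (hαmem : α ∈ alternatingGroup (Fin 5)) (hβmem : β ∈ alternatingGroup (Fin 5))
    (hαp : α p = p) (hαq : α q ≠ q)
    (hβq : β q = q) (hβp : β p ≠ p) :
    (β * α) p ≠ p ∧ (β * α) q ≠ q ∧ ¬ ((β * α) p = q ∧ (β * α) q = p) := by
  refine ⟨?_, ?_, ?_⟩
  · simp [Perm.mul_apply, hαp, hβp]
  · simp only [Perm.mul_apply]
    intro h
    exact hαq (β.injective (by rw [h, hβq]))
  · rintro ⟨h1, h2⟩
    simp only [Perm.mul_apply, hαp] at h1
    exact hpq (β.injective (by rw [h1, hβq]))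
end

section
/- Let α, β ∈ A₅ be such that the commutator [α, β] = α⁻¹β⁻¹αβ has order 2 and fixes the point p ∈ {1,...,5}. Then α fixes p and β fixes p. -/
open Equiv

def evL : List ((Fin 5 → Fin 5) × (Fin 5 → Fin 5)) := [
  (![0,1,2,3,4], ![0,1,2,3,4]),
  (![0,1,3,4,2], ![0,1,4,2,3]),
  (![0,1,4,2,3], ![0,1,3,4,2]),
  (![0,2,1,4,3], ![0,2,1,4,3]),
  (![0,2,3,1,4], ![0,3,1,2,4]),
  (![0,2,4,3,1], ![0,4,1,3,2]),
  (![0,3,1,2,4], ![0,2,3,1,4]),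
  (![0,3,2,4,1], ![0,4,2,1,3]),
  (![0,3,4,1,2], ![0,3,4,1,2]),
  (![0,4,1,3,2], ![0,2,4,3,1]),
  (![0,4,2,1,3], ![0,3,2,4,1]),
  (![0,4,3,2,1], ![0,4,3,2,1]),
  (![1,0,2,4,3], ![1,0,2,4,3]),
  (![1,0,3,2,4], ![1,0,3,2,4]),
  (![1,0,4,3,2], ![1,0,4,3,2]),
  (![1,2,0,3,4], ![2,0,1,3,4]),
  (![1,2,3,4,0], ![4,0,1,2,3]),
  (![1,2,4,0,3], ![3,0,1,4,2]),
  (![1,3,0,4,2], ![2,0,4,1,3]),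
  (![1,3,2,0,4], ![3,0,2,1,4]),
  (![1,3,4,2,0], ![4,0,3,1,2]),
  (![1,4,0,2,3], ![2,0,3,4,1]),
  (![1,4,2,3,0], ![4,0,2,3,1]),
  (![1,4,3,0,2], ![3,0,4,2,1]),
  (![2,0,1,3,4], ![1,2,0,3,4]),
  (![2,0,3,4,1], ![1,4,0,2,3]),
  (![2,0,4,1,3], ![1,3,0,4,2]),
  (![2,1,0,4,3], ![2,1,0,4,3]),
  (![2,1,3,0,4], ![3,1,0,2,4]),
  (![2,1,4,3,0], ![4,1,0,3,2]),
  (![2,3,0,1,4], ![2,3,0,1,4]),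
  (![2,3,1,4,0], ![4,2,0,1,3]),
  (![2,3,4,0,1], ![3,4,0,1,2]),
  (![2,4,0,3,1], ![2,4,0,3,1]),
  (![2,4,1,0,3], ![3,2,0,4,1]),
  (![2,4,3,1,0], ![4,3,0,2,1]),
  (![3,0,1,4,2], ![1,2,4,0,3]),
  (![3,0,2,1,4], ![1,3,2,0,4]),
  (![3,0,4,2,1], ![1,4,3,0,2]),
  (![3,1,0,2,4], ![2,1,3,0,4]),
  (![3,1,2,4,0], ![4,1,2,0,3]),
  (![3,1,4,0,2], ![3,1,4,0,2]),
  (![3,2,0,4,1], ![2,4,1,0,3]),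
  (![3,2,1,0,4], ![3,2,1,0,4]),
  (![3,2,4,1,0], ![4,3,1,0,2]),
  (![3,4,0,1,2], ![2,3,4,0,1]),
  (![3,4,1,2,0], ![4,2,3,0,1]),
  (![3,4,2,0,1], ![3,4,2,0,1]),
  (![4,0,1,2,3], ![1,2,3,4,0]),
  (![4,0,2,3,1], ![1,4,2,3,0]),
  (![4,0,3,1,2], ![1,3,4,2,0]),
  (![4,1,0,3,2], ![2,1,4,3,0]),
  (![4,1,2,0,3], ![3,1,2,4,0]),
  (![4,1,3,2,0], ![4,1,3,2,0]),
  (![4,2,0,1,3], ![2,3,1,4,0]),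
  (![4,2,1,3,0], ![4,2,1,3,0]),
  (![4,2,3,0,1], ![3,4,1,2,0]),
  (![4,3,0,2,1], ![2,4,3,1,0]),
  (![4,3,1,0,2], ![3,2,4,1,0]),
  (![4,3,2,1,0], ![4,3,2,1,0])]

def Pchk (a ai b bi : Fin 5 → Fin 5) : Prop :=
  (∀ q : Fin 5, ai (bi (a (b (ai (bi (a (b q))))))) = q) →
  (∃ q : Fin 5, ai (bi (a (b q))) ≠ q) →
  ∀ p : Fin 5, ai (bi (a (b p))) = p → a p = p ∧ b p = p

instance (a ai b bi : Fin 5 → Fin 5) : Decidable (Pchk a ai b bi) := by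
  unfold Pchk; infer_instance

set_option maxRecDepth 100000 in
theorem mainChk : (evL.all fun x => evL.all fun y => decide (Pchk x.1 x.2 y.1 y.2)) = true := by decide

set_option maxRecDepth 100000 in
theorem complete : ∀ α : Perm (Fin 5), Perm.sign α = 1 →
    ((⇑α, ⇑α⁻¹) : (Fin 5 → Fin 5) × (Fin 5 → Fin 5)) ∈ evL := by decide

theorem commutator_order_two_fixed_point_shared
    (α β : Perm (Fin 5))
    (hα : α ∈ alternatingGroup (Fin 5)) (hβ : β ∈ alternatingGroup (Fin 5))
    (h2 : orderOf (α⁻¹ * β⁻¹ * α * β) = 2)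
    (p : Fin 5) (hp : (α⁻¹ * β⁻¹ * α * β) p = p) :
    α p = p ∧ β p = p := by
  have hsa : Perm.sign α = 1 := Perm.mem_alternatingGroup.mp hα
  have hsb : Perm.sign β = 1 := Perm.mem_alternatingGroup.mp hβ
  have ma := complete α hsa
  have mb := complete β hsb
  have h1 := List.all_eq_true.mp mainChk _ ma
  have hPd := List.all_eq_true.mp h1 _ mb
  have hP : Pchk ⇑α ⇑α⁻¹ ⇑β ⇑β⁻¹ := of_decide_eq_true hPd
  have hsq : (α⁻¹ * β⁻¹ * α * β) * (α⁻¹ * β⁻¹ * α * β) = 1 := by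
    have := pow_orderOf_eq_one (α⁻¹ * β⁻¹ * α * β)
    rwa [h2, pow_two] at this
  have hne : (α⁻¹ * β⁻¹ * α * β) ≠ 1 := by
    intro h
    rw [h, orderOf_one] at h2
    omega
  refine hP ?_ ?_ p ?_
  · intro q
    have := Equiv.ext_iff.mp hsq q
    simpa [Perm.mul_apply] using this
  · by_contra hno
    push_neg at hno
    exact hne (Equiv.ext fun q => by simpa [Perm.mul_apply] using hno q)
  · simpa [Perm.mul_apply] using hp
end

section
/- Every proper subgroup of A₅ whose order is divisible by 4 has a fixed point in {1,...,5}, i.e., there exists p ∈ {1,...,5} fixed by every element of the subgroup. -/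
/-!
A subgroup `P ≤ H` of order 4 is a 2-group acting on five points, so it fixes a point `p`. Its
nontrivial elements are double transpositions, which fix nothing but `p`, so `P` acts regularly on
the remaining four points. Hence if `H` moved `p` it would be transitive, and `20 ∣ |H|`. But `A₅`
is simple, so it embeds into the symmetric group on the cosets of a proper subgroup, whose index
must therefore be at least 5.
-/

open Equiv

open scoped Nat

namespace Subgroup

variable {G : Type*} [Group G]

theorem index_normalCore_dvd_factorial (H : Subgroup G) [H.FiniteIndex] :
    H.normalCore.index ∣ H.index ! := by
  rw [normalCore_eq_ker, index_ker, index_eq_card, ← Nat.card_perm]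
  exact card_subgroup_dvd_card (MulAction.toPermHom G (G ⧸ H)).range

theorem card_dvd_index_factorial_of_ne_top [IsSimpleGroup G] [Finite G] {H : Subgroup G}
    (hH : H ≠ ⊤) : Nat.card G ∣ H.index ! := by
  have hcore : H.normalCore = ⊥ :=
    H.normalCore_normal.eq_bot_or_eq_top.resolve_right fun h ↦
      hH (eq_top_iff.2 (h ▸ H.normalCore_le))
  simpa [hcore] using H.index_normalCore_dvd_factorial

end Subgroup

theorem MulAction.card_dvd_card_of_isPretransitive (G : Type*) {X : Type*} [Group G]
    [MulAction G X] [MulAction.IsPretransitive G X] [Nonempty X] : Nat.card X ∣ Nat.card G := by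
  obtain ⟨x⟩ := ‹Nonempty X›
  exact index_stabilizer_of_transitive G x ▸ (stabilizer G x).index_dvd_card

namespace alternatingGroup

set_option maxRecDepth 10000 in
theorem eq_one_of_pow_four_eq_one_of_fixes_two {σ : Perm (Fin 5)}
    (hσ : σ ∈ alternatingGroup (Fin 5)) (h4 : σ ^ 4 = 1) {a b : Fin 5} (hab : a ≠ b)
    (ha : σ a = a) (hb : σ b = b) : σ = 1 := by
  rw [Perm.mem_alternatingGroup] at hσ
  revert σ a b
  decide

theorem nat_card_fin_five : Nat.card (alternatingGroup (Fin 5)) = 60 := by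
  rw [nat_card_alternatingGroup, Nat.card_eq_fintype_card, Fintype.card_fin]
  rfl

theorem five_le_index_of_ne_top {H : Subgroup (alternatingGroup (Fin 5))} (hH : H ≠ ⊤) :
    5 ≤ H.index := by
  have hfact : 60 ∣ H.index ! :=
    nat_card_fin_five ▸ Subgroup.card_dvd_index_factorial_of_ne_top hH
  by_contra! h
  interval_cases H.index <;> norm_num [Nat.factorial] at hfact

theorem card_le_twelve_of_lt {H : Subgroup (Perm (Fin 5))} (hlt : H < alternatingGroup (Fin 5)) :
    Nat.card H ≤ 12 := by
  set H' := H.subgroupOf (alternatingGroup (Fin 5))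
  have hindex : 5 ≤ H'.index :=
    five_le_index_of_ne_top fun h ↦ hlt.not_ge (Subgroup.subgroupOf_eq_top.1 h)
  have hcard : Nat.card H * H'.index = 60 := by
    rw [← Nat.card_congr (Subgroup.subgroupOfEquivOfLe hlt.le).toEquiv, H'.card_mul_index,
      nat_card_fin_five]
  nlinarith

theorem exists_mem_apply_eq_of_card_eq_four {P : Subgroup (Perm (Fin 5))}
    (hPA : P ≤ alternatingGroup (Fin 5)) (hP : Nat.card P = 4) {p : Fin 5}
    (hp : ∀ g ∈ P, g p = p) {q : Fin 5} (hq : q ≠ p) (x : Fin 5) (hx : x ≠ p) :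
    ∃ g ∈ P, g q = x := by
  have hstab : ∀ k ∈ P, k q = q → k = 1 := fun k hk hkq ↦
    eq_one_of_pow_four_eq_one_of_fixes_two (hPA hk)
      (by simpa [hP] using congrArg Subtype.val (pow_card_eq_one' (G := P) (x := ⟨k, hk⟩)))
      hq hkq (hp k hk)
  let f : P → {y : Fin 5 // y ≠ p} := fun g ↦
    ⟨(g : Perm (Fin 5)) q, fun h ↦
      hq ((g : Perm (Fin 5)).injective (h.trans (hp g g.2).symm))⟩
  have hf : Function.Injective f := by
    intro g₁ g₂ hg
    have hgq : (g₁ : Perm (Fin 5)) q = (g₂ : Perm (Fin 5)) q := congrArg Subtype.val hg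
    have hk := hstab _ (P.mul_mem (P.inv_mem g₂.2) g₁.2) <| by
      simp [Perm.mul_apply, hgq]
    exact Subtype.ext (inv_mul_eq_one.1 hk).symm
  obtain ⟨g, hg⟩ := (hf.bijective_of_nat_card_le (by simp [hP])).2 ⟨x, hx⟩
  exact ⟨g, g.2, congrArg Subtype.val hg⟩

end alternatingGroup

theorem proper_subgroup_A5_order_div_four_has_fixed_point
    (H : Subgroup (Perm (Fin 5)))
    (hlt : H < alternatingGroup (Fin 5))
    (hdvd : 4 ∣ Nat.card H) :
    ∃ p : Fin 5, ∀ σ ∈ H, σ p = p := by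
  obtain ⟨P₀, hP₀⟩ := Sylow.exists_subgroup_card_pow_prime 2 (n := 2) (by simpa using hdvd)
  set P := P₀.map H.subtype
  have hPH : P ≤ H := Subgroup.map_subtype_le P₀
  have hP : Nat.card P = 2 ^ 2 := by rw [Subgroup.card_map_of_injective H.subtype_injective, hP₀]
  obtain ⟨p, hp⟩ := (IsPGroup.of_card hP).nonempty_fixed_point_of_prime_not_dvd_card (Fin 5)
    (by norm_num)
  refine ⟨p, ?_⟩
  by_contra! ⟨σ, hσ, hσp⟩
  have htrans : MulAction.IsPretransitive H (Fin 5) := by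
    refine (MulAction.isPretransitive_iff_base p).2 fun x ↦ ?_
    by_cases hx : x = p
    · exact ⟨1, hx ▸ rfl⟩
    obtain ⟨g, hg, hgx⟩ := alternatingGroup.exists_mem_apply_eq_of_card_eq_four
      (hPH.trans hlt.le) hP (fun g hg ↦ hp ⟨g, hg⟩) hσp x hx
    exact ⟨⟨g * σ, H.mul_mem (hPH hg) hσ⟩, hgx⟩
  have h5 : 5 ∣ Nat.card H := by
    simpa using MulAction.card_dvd_card_of_isPretransitive H (X := Fin 5)
  have h12 := alternatingGroup.card_le_twelve_of_lt hlt
  have hpos : 0 < Nat.card H := Nat.card_pos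
  omega
end

section
/- Every subgroup of A₅ whose order is divisible by 3 and which acts transitively on {1,...,5} is equal to A₅. -/
open Equiv

theorem subgroup_A5_order_div_three_transitive_eq_A5
    (H : Subgroup (Perm (Fin 5)))
    (hle : H ≤ alternatingGroup (Fin 5))
    (hdvd : 3 ∣ Nat.card H)
    (htrans : ∀ i j : Fin 5, ∃ σ ∈ H, σ i = j) :
    H = alternatingGroup (Fin 5) := by
  classical
  -- Step 1: 5 ∣ Nat.card H by orbit-stabilizer, since H is transitive.
  have horb : MulAction.orbit H (0 : Fin 5) = Set.univ := by
    ext j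
    simp only [Set.mem_univ, iff_true, MulAction.mem_orbit_iff]
    obtain ⟨σ, hσ, hσ0⟩ := htrans 0 j
    exact ⟨⟨σ, hσ⟩, hσ0⟩
  have h5 : 5 ∣ Nat.card H := by
    have key := MulAction.card_orbit_mul_card_stabilizer_eq_card_group H (0 : Fin 5)
    have horbcard : Fintype.card (MulAction.orbit H (0 : Fin 5)) = 5 := by
      have := (set_fintype_card_eq_univ_iff (MulAction.orbit H (0 : Fin 5))).mpr horb
      simpa using this
    rw [horbcard] at key
    rw [Nat.card_eq_fintype_card]
    exact ⟨_, key.symm⟩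
  have h15 : 15 ∣ Nat.card H := Nat.Coprime.mul_dvd_of_dvd_of_dvd (by norm_num) hdvd h5
  -- Step 2: work inside G = A5.
  have hcardG : Nat.card (alternatingGroup (Fin 5)) = 60 := by
    rw [Nat.card_eq_fintype_card]
    have h2 : 2 * Fintype.card (alternatingGroup (Fin 5)) = 120 := by
      rw [two_mul_card_alternatingGroup, Fintype.card_perm, Fintype.card_fin]
      decide
    omega
  set G := alternatingGroup (Fin 5) with hG
  set K := H.subgroupOf G with hK
  have hcardK : Nat.card K = Nat.card H :=
    Nat.card_congr (Subgroup.subgroupOfEquivOfLe hle).toEquiv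
  suffices hKtop : K = ⊤ by
    exact le_antisymm hle (Subgroup.subgroupOf_eq_top.mp hKtop)
  by_contra hKne
  -- K is a proper subgroup; its index is small.
  have hmul : K.index * Nat.card K = 60 := by rw [Subgroup.index_mul_card, hcardG]
  obtain ⟨m, hm⟩ := h15
  rw [hcardK, hm, show K.index * (15 * m) = 15 * (K.index * m) from by ring] at hmul
  have hidx : K.index * m = 4 := by omega
  have hidx4 : K.index ≤ 4 := Nat.le_of_dvd (by norm_num) ⟨m, hidx.symm⟩
  -- normal core of K is trivial (by simplicity), giving a faithful action on cosets.
  have hcore := (Subgroup.normalCore_normal K).eq_bot_or_eq_top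
  rcases hcore with hbot | htop
  · -- faithful action of G on G ⧸ K, so 60 ≤ (index)! ≤ 24, contradiction
    have hker : (MulAction.toPermHom G (G ⧸ K)).ker = ⊥ := by
      rw [← Subgroup.normalCore_eq_ker, hbot]
    have hinj : Function.Injective (MulAction.toPermHom G (G ⧸ K)) :=
      (MonoidHom.ker_eq_bot_iff _).mp hker
    have hle' : Nat.card G ≤ Nat.card (Perm (G ⧸ K)) :=
      Nat.card_le_card_of_injective _ hinj
    have hpc : Nat.card (Perm (G ⧸ K)) = Nat.factorial K.index := by
      rw [Nat.card_eq_fintype_card, Fintype.card_perm, ← Nat.card_eq_fintype_card]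
      rfl
    rw [hcardG, hpc] at hle'
    have hfac : Nat.factorial K.index ≤ Nat.factorial 4 := Nat.factorial_le hidx4
    norm_num [Nat.factorial] at hfac
    omega
  · exact hKne (top_le_iff.mp (htop ▸ Subgroup.normalCore_le K))
end

section
/- Let d ≥ 2 and let 1 ≤ n₁ ≤ ... ≤ n_k < d be integers such that Σᵢ nᵢ is even and Σᵢ nᵢ ≥ 2d − 2. Then there exist permutations α₁,...,α_k ∈ S_d such that each αᵢ is an (nᵢ+1)-cycle, α₁α₂⋯α_k = id, and the subgroup generated by the αᵢ acts transitively on {1,...,d}. -/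
/-!
Call a list `l` realizable on a finite set `s` of size `m` if there are cycles of lengths `n + 1`,
`n ∈ l`, moving only points of `s`, with product `1` and generating a group transitive on `s`.
The Hurwitz move `(g, h) ↦ (g h g⁻¹, g)` keeps the product and the generated group, so this only
depends on `l` up to order. Induct on `∑ l + |l|`, with `u ≤ v ≤ w ≤ ⋯` the entries of `l`:
* if `u + v < m`, realize `(u + v) :: rest` and split its `(u + v + 1)`-cycle into a product of a
  `(u + 1)`-cycle and a `(v + 1)`-cycle with supports inside it;
* `[m - 1, m - 1]` is realized by an `m`-cycle and its inverse; if all entries are `1`, so that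
  `m = 2`, append the transposition of `s` twice to a realization of the shorter list;
* otherwise realize `l` with `v` and `w` lowered by one and insert a point `y` into their cycles
  `g` and `h` as `g * swap a y` and `swap a y * h`, which keeps `g * h`. When `∑ l ≥ 2m`, `y` and
  `a` are found in `s`; when `∑ l = 2m - 2`, the shorter list is realized on `m - 1` points, `y` is
  the remaining one, and `a` is a common point of `g` and `h`.
-/

open Equiv Equiv.Perm Finset

theorem Subgroup.closure_setOf_mem_cons {G : Type*} [Group G] (g : G) (L : List G) :
    closure {x | x ∈ g :: L} = closure {g} ⊔ closure {x | x ∈ L} := by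
  rw [← closure_union]
  congr 1
  ext
  simp

theorem exists_map_eq_prod_eq_closure_eq_of_perm {G β : Type*} [Group G] (f : G → β)
    (hf : ∀ g h, f (g * h * g⁻¹) = f h) {L : List G} {l : List β} (hp : (L.map f).Perm l) :
    ∃ L' : List G, L'.map f = l ∧ L'.prod = L.prod ∧
      Subgroup.closure {g | g ∈ L'} = Subgroup.closure {g | g ∈ L} := by
  generalize hL : L.map f = l₀ at hp
  induction hp generalizing L with
  | nil => exact ⟨L, hL, rfl, rfl⟩
  | cons x _ ih =>
    obtain ⟨g, T, rfl, hg, hT⟩ := List.map_eq_cons_iff.1 hL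
    obtain ⟨T', hT', hprod, hcl⟩ := ih hT
    refine ⟨g :: T', by simp [hg, hT'], by simp [hprod], ?_⟩
    rw [Subgroup.closure_setOf_mem_cons, Subgroup.closure_setOf_mem_cons, hcl]
  | swap x y l =>
    obtain ⟨g, _, rfl, hg, hT⟩ := List.map_eq_cons_iff.1 hL
    obtain ⟨h, T, rfl, hh, hT⟩ := List.map_eq_cons_iff.1 hT
    refine ⟨g * h * g⁻¹ :: g :: T, by simp [hf, hg, hh, hT], by simp [mul_assoc], ?_⟩
    -- a subgroup containing `g` contains `g * h * g⁻¹` iff it contains `h`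
    have hle : ∀ K : Subgroup G, Subgroup.closure {g * h * g⁻¹} ⊔ Subgroup.closure {g} ≤ K ↔
        Subgroup.closure {g} ⊔ Subgroup.closure {h} ≤ K := by
      intro K
      simp only [sup_le_iff, Subgroup.closure_le, Set.singleton_subset_iff, SetLike.mem_coe]
      constructor
      · rintro ⟨hK, hgK⟩
        exact ⟨hgK, by
          simpa [K.mul_mem_cancel_left hgK, K.mul_mem_cancel_right (K.inv_mem hgK)] using hK⟩
      · rintro ⟨hgK, hhK⟩
        exact ⟨K.mul_mem (K.mul_mem hgK hhK) (K.inv_mem hgK), hgK⟩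
    simp only [Subgroup.closure_setOf_mem_cons, ← sup_assoc]
    rw [le_antisymm ((hle _).2 le_rfl) ((hle _).1 le_rfl)]
  | trans _ _ ih₁ ih₂ =>
    obtain ⟨L₁, h₁, hprod₁, hcl₁⟩ := ih₁ hL
    obtain ⟨L₂, h₂, hprod₂, hcl₂⟩ := ih₂ h₁
    exact ⟨L₂, h₂, hprod₂.trans hprod₁, hcl₂.trans hcl₁⟩

theorem Finset.exists_mem_mem_sdiff_iff_notMem {α : Type*} [DecidableEq α] {s t u : Finset α}
    (hus : u ⊆ s) (ht : t.Nonempty) (hu : u.Nonempty) (htc : #t < #s)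
    (huc : #u < #s) : ∃ a ∈ t, ∃ y ∈ s \ t, (a ∈ u ↔ y ∉ u) := by
  by_cases hut : u ⊆ t
  · obtain ⟨a, ha⟩ := hu
    obtain ⟨y, hys, hyt⟩ := exists_mem_notMem_of_card_lt_card htc
    exact ⟨a, hut ha, y, mem_sdiff.2 ⟨hys, hyt⟩, iff_of_true ha fun hyu => hyt (hut hyu)⟩
  by_cases htu : t ⊆ u
  · obtain ⟨a, ha⟩ := ht
    obtain ⟨y, hys, hyu⟩ := exists_mem_notMem_of_card_lt_card huc
    exact ⟨a, ha, y, mem_sdiff.2 ⟨hys, fun hyt => hyu (htu hyt)⟩, iff_of_true (htu ha) hyu⟩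
  obtain ⟨a, hat, hau⟩ := not_subset.1 htu
  obtain ⟨y, hyu, hyt⟩ := not_subset.1 hut
  exact ⟨a, hat, y, mem_sdiff.2 ⟨hus hyu, hyt⟩, iff_of_false hau (not_not.2 hyu)⟩

theorem List.formPerm_append_cons {α : Type*} [DecidableEq α] (l₁ l₂ : List α) (x : α) :
    (l₁ ++ x :: l₂).formPerm = (l₁ ++ [x]).formPerm * (x :: l₂).formPerm := by
  induction l₁ with
  | nil => simp
  | cons a t ih =>
    cases t with
    | nil => rw [List.singleton_append, List.singleton_append, List.formPerm_cons_cons,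
        List.formPerm_pair]
    | cons b t =>
      simp only [List.cons_append] at ih ⊢
      rw [List.formPerm_cons_cons, List.formPerm_cons_cons, ih, mul_assoc]

namespace Equiv.Perm

variable {α : Type*} [DecidableEq α] [Fintype α]

theorem cycleType_eq_singleton_iff {σ : Perm α} {n : ℕ} :
    σ.cycleType = {n} ↔ σ.IsCycle ∧ #σ.support = n := by
  refine ⟨fun h => ⟨card_cycleType_eq_one.1 (by simp [h]), ?_⟩, fun ⟨hσ, hn⟩ => hn ▸ hσ.cycleType⟩
  rw [← sum_cycleType, h, Multiset.sum_singleton]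

theorem support_formPerm_of_two_le_length {l : List α} (hl : l.Nodup) (hn : 2 ≤ l.length) :
    (l.formPerm).support = l.toFinset :=
  List.support_formPerm_of_nodup l hl fun x h => by simp [h] at hn

theorem cycleType_formPerm_of_nodup {l : List α} (hl : l.Nodup) (hn : 2 ≤ l.length) :
    (l.formPerm).cycleType = {l.length} := by
  rw [(List.isCycle_formPerm hl hn).cycleType, support_formPerm_of_two_le_length hl hn,
    List.toFinset_card_of_nodup hl]

theorem IsCycle.exists_formPerm_cons_eq {g : Perm α} (hg : g.IsCycle) {a : α}
    (ha : a ∈ g.support) :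
    ∃ t : List α, (a :: t).Nodup ∧ (a :: t).toFinset = g.support ∧ (a :: t).formPerm = g := by
  have hne : g.toList a ≠ [] := toList_eq_nil_iff.not.2 (not_not.2 ha)
  have hcons : a :: (g.toList a).tail = g.toList a := by
    conv_rhs => rw [← List.cons_head_tail hne]
    rw [List.head_eq_getElem_zero, toList_getElem_zero g a ha]
  have hform : (g.toList a).formPerm = g := by
    rw [formPerm_toList, hg.cycleOf_eq (mem_support.1 ha)]
  refine ⟨(g.toList a).tail, hcons ▸ nodup_toList g a, ?_, hcons ▸ hform⟩
  rw [hcons, ← support_formPerm_of_two_le_length (nodup_toList g a)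
    (two_le_length_toList_iff_mem_support.2 ha), hform]

theorem IsCycle.swap_mul_of_mem_of_notMem {g : Perm α} (hg : g.IsCycle) {x y : α}
    (hx : x ∈ g.support) (hy : y ∉ g.support) :
    (swap x y * g).IsCycle ∧ (swap x y * g).support = insert y g.support := by
  obtain ⟨t, hnd, hsupp, hform⟩ := hg.exists_formPerm_cons_eq hx
  have hyt : y ∉ x :: t := by rwa [← List.mem_toFinset, hsupp]
  have hnd' : (y :: x :: t).Nodup := List.nodup_cons.2 ⟨hyt, hnd⟩
  have hform' : (y :: x :: t).formPerm = swap x y * g := by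
    rw [List.formPerm_cons_cons, hform, swap_comm]
  rw [← hform']
  exact ⟨List.isCycle_formPerm hnd' (by simp), by
    rw [support_formPerm_of_two_le_length hnd' (by simp), List.toFinset_cons, hsupp]⟩

theorem IsCycle.swap_mul_of_mem_iff_notMem {g : Perm α} (hg : g.IsCycle) {x y : α}
    (hxy : x ∈ g.support ↔ y ∉ g.support) :
    (swap x y * g).IsCycle ∧ (swap x y * g).support = insert x (insert y g.support) ∧
      #(swap x y * g).support = #g.support + 1 := by
  by_cases hx : x ∈ g.support
  · have hy := hxy.1 hx
    obtain ⟨hc, hs⟩ := hg.swap_mul_of_mem_of_notMem hx hy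
    rw [hs, insert_eq_of_mem (mem_insert_of_mem hx), card_insert_of_notMem hy]
    exact ⟨hc, rfl, rfl⟩
  · have hy : y ∈ g.support := not_not.1 (hxy.not.1 hx)
    obtain ⟨hc, hs⟩ := hg.swap_mul_of_mem_of_notMem hy hx
    rw [swap_comm, hs, insert_eq_of_mem hy, card_insert_of_notMem hx]
    exact ⟨hc, rfl, rfl⟩

theorem exists_mul_eq_of_cycleType_eq {C : Perm α} {p q : ℕ} (hC : C.cycleType = {p + q + 1})
    (hp : 1 ≤ p) (hq : 1 ≤ q) :
    ∃ g h : Perm α, g.cycleType = {p + 1} ∧ h.cycleType = {q + 1} ∧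
      g.support ⊆ C.support ∧ h.support ⊆ C.support ∧ g * h = C := by
  obtain ⟨hCc, hCcard⟩ := cycleType_eq_singleton_iff.1 hC
  obtain ⟨a, ha⟩ := hCc.nonempty_support
  obtain ⟨t, hnd, hsupp, hform⟩ := hCc.exists_formPerm_cons_eq ha
  obtain ⟨l₁, x, l₂, hlc, hl₁⟩ : ∃ l₁ x l₂, a :: t = l₁ ++ x :: l₂ ∧ l₁.length = p := by
    have hp' : p < (a :: t).length := by
      rw [← List.toFinset_card_of_nodup hnd, hsupp, hCcard]; omega
    exact ⟨_, _, _, (List.take_append_drop p _).symm.trans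
      (by rw [List.drop_eq_getElem_cons hp']), List.length_take_of_le hp'.le⟩
  have hl₂ : l₂.length = q := by
    have := congrArg List.length hlc
    rw [← List.toFinset_card_of_nodup hnd, hsupp, hCcard] at this
    simp at this; omega
  rw [hlc] at hnd hsupp hform
  have hsub₁ : (l₁ ++ [x]).Sublist (l₁ ++ x :: l₂) :=
    ((List.nil_sublist l₂).cons_cons x).append_left l₁
  have hsub₂ : (x :: l₂).Sublist (l₁ ++ x :: l₂) := List.sublist_append_right l₁ _
  refine ⟨_, _, ?_, ?_, ?_, ?_, by rw [← hform, List.formPerm_append_cons]⟩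
  · rw [cycleType_formPerm_of_nodup (hsub₁.nodup hnd) (by simp; omega)]
    simp [hl₁]
  · rw [cycleType_formPerm_of_nodup (hsub₂.nodup hnd) (by simp; omega), List.length_cons, hl₂]
  · rw [← hsupp, support_formPerm_of_two_le_length (hsub₁.nodup hnd) (by simp; omega)]
    exact fun z hz => List.mem_toFinset.2 (hsub₁.subset (List.mem_toFinset.1 hz))
  · rw [← hsupp, support_formPerm_of_two_le_length (hsub₂.nodup hnd) (by simp; omega)]
    exact fun z hz => List.mem_toFinset.2 (hsub₂.subset (List.mem_toFinset.1 hz))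

theorem support_subset_of_mem_closure {S : Set (Perm α)} {s : Finset α}
    (hS : ∀ g ∈ S, g.support ⊆ s) {σ : Perm α} (hσ : σ ∈ Subgroup.closure S) :
    σ.support ⊆ s := by
  induction hσ using Subgroup.closure_induction with
  | mem g hg => exact hS g hg
  | one => simp
  | mul σ τ _ _ hσ hτ => exact (support_mul_le σ τ).trans (union_subset hσ hτ)
  | inv σ _ hσ => rwa [support_inv]

theorem IsCycle.exists_mem_apply_eq {H : Subgroup (Perm α)} {g : Perm α} (hg : g.IsCycle)
    (hgH : g ∈ H) {x y : α} (hx : x ∈ g.support) (hy : y ∈ g.support) : ∃ σ ∈ H, σ x = y := by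
  obtain ⟨i, rfl⟩ := hg.exists_pow_eq (mem_support.1 hx) (mem_support.1 hy)
  exact ⟨g ^ i, H.zpow_mem hgH i, rfl⟩

theorem exists_mem_apply_eq_apply_of_mem_closure {H : Subgroup (Perm α)} {S : Set (Perm α)}
    (hS : ∀ g ∈ S, ∃ c ∈ H, c.IsCycle ∧ g.support ⊆ c.support) {σ : Perm α}
    (hσ : σ ∈ Subgroup.closure S) (x : α) : ∃ τ ∈ H, τ x = σ x := by
  induction hσ using Subgroup.closure_induction generalizing x with
  | mem g hg =>
    by_cases hgx : g x = x
    · exact ⟨1, H.one_mem, hgx.symm⟩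
    obtain ⟨c, hcH, hc, hgc⟩ := hS g hg
    exact hc.exists_mem_apply_eq hcH (hgc (mem_support.2 hgx))
      (hgc (apply_mem_support.2 (mem_support.2 hgx)))
  | one => exact ⟨1, H.one_mem, rfl⟩
  | mul σ τ _ _ hσ hτ =>
    obtain ⟨τ₁, hτ₁, h₁⟩ := hτ x
    obtain ⟨σ₁, hσ₁, h₂⟩ := hσ (τ x)
    exact ⟨σ₁ * τ₁, H.mul_mem hσ₁ hτ₁, by simp [h₁, h₂]⟩
  | inv σ _ hσ =>
    obtain ⟨τ, hτ, h⟩ := hσ (σ⁻¹ x)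
    exact ⟨τ⁻¹, H.inv_mem hτ, by rw [inv_eq_iff_eq, h]; simp⟩

end Equiv.Perm

theorem Finset.exists_isCycle_support_eq {α : Type*} [DecidableEq α] [Fintype α] {s : Finset α}
    (hs : 2 ≤ #s) : ∃ g : Perm α, g.IsCycle ∧ g.support = s :=
  ⟨s.toList.formPerm, List.isCycle_formPerm s.nodup_toList (by simpa), by
    rw [support_formPerm_of_two_le_length s.nodup_toList (by simpa), toList_toFinset]⟩

namespace Hurwitz

variable {α : Type*} [DecidableEq α] [Fintype α] {s : Finset α} {l : List ℕ}

structure IsRealization (s : Finset α) (l : List ℕ) (L : List (Perm α)) : Prop where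
  map_cycleType : L.map cycleType = l.map fun n => {n + 1}
  prod_eq_one : L.prod = 1
  support_subset : ∀ g ∈ L, g.support ⊆ s
  exists_apply_eq : ∀ x ∈ s, ∀ y ∈ s, ∃ σ ∈ Subgroup.closure {g | g ∈ L}, σ x = y

def Realizable (s : Finset α) (l : List ℕ) : Prop :=
  ∃ L, IsRealization s l L

theorem IsRealization.isCycle {L : List (Perm α)} (hL : IsRealization s l L) {g : Perm α}
    (hg : g ∈ L) : g.IsCycle := by
  obtain ⟨n, -, hn⟩ := List.mem_map.1 (hL.map_cycleType ▸ List.mem_map_of_mem hg)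
  exact (cycleType_eq_singleton_iff.1 hn.symm).1

theorem Realizable.perm {l' : List ℕ} (h : Realizable s l) (hp : l.Perm l') :
    Realizable s l' := by
  obtain ⟨L, hL⟩ := h
  obtain ⟨L', hmap, hprod, hcl⟩ := exists_map_eq_prod_eq_closure_eq_of_perm cycleType
    (fun _ _ => cycleType_conj) (hL.map_cycleType ▸ hp.map _)
  refine ⟨L', hmap, hprod.trans hL.prod_eq_one, fun g hg => ?_, hcl ▸ hL.exists_apply_eq⟩
  exact support_subset_of_mem_closure hL.support_subset (hcl ▸ Subgroup.subset_closure hg)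

theorem realizable_nil (hs : #s ≤ 1) : Realizable s ([] : List ℕ) :=
  ⟨[], rfl, rfl, by simp, fun x hx y hy => ⟨1, one_mem _, card_le_one.1 hs x hx y hy⟩⟩

theorem realizable_pair (hs : 2 ≤ #s) : Realizable s [#s - 1, #s - 1] := by
  obtain ⟨g, hg, hgs⟩ := exists_isCycle_support_eq hs
  have hgH : g ∈ Subgroup.closure {x | x ∈ [g, g⁻¹]} := Subgroup.subset_closure (by simp)
  refine ⟨[g, g⁻¹], ?_, by simp, by simp [hgs], fun x hx y hy =>
    hg.exists_mem_apply_eq hgH (hgs ▸ hx) (hgs ▸ hy)⟩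
  simp [hg.cycleType, hgs, Nat.sub_add_cancel (by omega : 1 ≤ #s)]

theorem Realizable.cons_cons (h : Realizable s l) {g : Perm α} {n : ℕ}
    (hg : g.cycleType = {n + 1}) (hgs : g.support ⊆ s) : Realizable s (n :: n :: l) := by
  obtain ⟨L, hL⟩ := h
  refine ⟨g :: g⁻¹ :: L, by simp [hg, hL.map_cycleType], by simp [hL.prod_eq_one], ?_,
    fun x hx y hy => ?_⟩
  · simpa [hgs] using hL.support_subset
  · obtain ⟨σ, hσ, hxy⟩ := hL.exists_apply_eq x hx y hy
    exact ⟨σ, Subgroup.closure_mono (fun k hk => by simp_all) hσ, hxy⟩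

theorem Realizable.split {p q : ℕ} (h : Realizable s ((p + q) :: l)) (hp : 1 ≤ p) (hq : 1 ≤ q) :
    Realizable s (p :: q :: l) := by
  obtain ⟨L, hL⟩ := h
  obtain ⟨C, T, rfl, hC, hT⟩ := List.map_eq_cons_iff.1 hL.map_cycleType
  obtain ⟨g, h, hg, hh, hgC, hhC, rfl⟩ := exists_mul_eq_of_cycleType_eq hC hp hq
  have hCs := hL.support_subset _ List.mem_cons_self
  refine ⟨g :: h :: T, by simp [hg, hh, hT], by simpa [mul_assoc] using hL.prod_eq_one, ?_,
    fun x hx y hy => ?_⟩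
  · simpa [hgC.trans hCs, hhC.trans hCs] using fun k hk => hL.support_subset k (by simp [hk])
  · obtain ⟨σ, hσ, hxy⟩ := hL.exists_apply_eq x hx y hy
    refine ⟨σ, (Subgroup.closure_le _).2 ?_ hσ, hxy⟩
    intro k hk
    rcases List.mem_cons.1 hk with rfl | hk
    · exact mul_mem (Subgroup.subset_closure (by simp)) (Subgroup.subset_closure (by simp))
    · exact Subgroup.subset_closure (by simp [hk])

theorem IsRealization.insert_swap {v w : ℕ} {g h : Perm α} {T : List (Perm α)}
    (hR : IsRealization s (v :: w :: l) (g :: h :: T)) {a y : α} (ha : a ∈ g.support)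
    (hy : y ∉ g.support) (hay : a ∈ h.support ↔ y ∉ h.support) :
    IsRealization (insert y s) ((v + 1) :: (w + 1) :: l) (g * swap a y :: swap a y * h :: T) := by
  have hmap := hR.map_cycleType
  simp only [List.map_cons, List.cons.injEq] at hmap
  obtain ⟨hgc, hhc, hT⟩ := hmap
  obtain ⟨hg, hgcard⟩ := cycleType_eq_singleton_iff.1 hgc
  obtain ⟨hh, hhcard⟩ := cycleType_eq_singleton_iff.1 hhc
  have hgs := hR.support_subset g (by simp)
  have hhs := hR.support_subset h (by simp)
  obtain ⟨hg', hg's, hg'card⟩ : (g * swap a y).IsCycle ∧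
      (g * swap a y).support = insert (g a) (insert y g.support) ∧
      #(g * swap a y).support = #g.support + 1 := by
    rw [mul_swap_eq_swap_mul, notMem_support.1 hy]
    exact hg.swap_mul_of_mem_iff_notMem (iff_of_true (apply_mem_support.2 ha) hy)
  obtain ⟨hh', hh's, hh'card⟩ := hh.swap_mul_of_mem_iff_notMem hay
  set H := Subgroup.closure {k | k ∈ g * swap a y :: swap a y * h :: T}
  have hcover : ∀ k ∈ {k | k ∈ g :: h :: T}, ∃ c ∈ H, c.IsCycle ∧ k.support ⊆ c.support := by
    intro k hk
    rcases List.mem_cons.1 hk with rfl | hk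
    · exact ⟨_, Subgroup.subset_closure (by simp), hg', hg's ▸
        (subset_insert _ _).trans (subset_insert _ _)⟩
    rcases List.mem_cons.1 hk with rfl | hk
    · exact ⟨_, Subgroup.subset_closure (by simp), hh', hh's ▸
        (subset_insert _ _).trans (subset_insert _ _)⟩
    · exact ⟨k, Subgroup.subset_closure (by simp [hk]), hR.isCycle (by simp [hk]), le_rfl⟩
  have hreach : ∀ x ∈ insert y s, ∃ σ ∈ H, σ a = x := by
    intro x hx
    rcases mem_insert.1 hx with rfl | hx
    · exact hg'.exists_mem_apply_eq (Subgroup.subset_closure (by simp)) (by simp [hg's, ha])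
        (by simp [hg's])
    · obtain ⟨σ, hσ, rfl⟩ := hR.exists_apply_eq a (hgs ha) x hx
      exact exists_mem_apply_eq_apply_of_mem_closure hcover hσ a
  refine ⟨?_, by simpa [mul_assoc] using hR.prod_eq_one, ?_, fun x hx x' hx' => ?_⟩
  · simp [hT, cycleType_eq_singleton_iff, hg', hh', hg'card, hh'card, hgcard, hhcard]
  · intro k hk
    rcases List.mem_cons.1 hk with rfl | hk
    · rw [hg's]
      exact insert_subset (mem_insert_of_mem (hgs (apply_mem_support.2 ha)))
        (insert_subset_insert y hgs)
    rcases List.mem_cons.1 hk with rfl | hk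
    · rw [hh's]
      exact insert_subset (mem_insert_of_mem (hgs ha)) (insert_subset_insert y hhs)
    · exact (hR.support_subset k (by simp [hk])).trans (subset_insert _ _)
  · obtain ⟨σ, hσ, rfl⟩ := hreach x hx
    obtain ⟨τ, hτ, rfl⟩ := hreach x' hx'
    exact ⟨τ * σ⁻¹, mul_mem hτ (inv_mem hσ), by simp⟩

theorem Realizable.succ_succ {v w : ℕ} (h : Realizable s (v :: w :: l)) (hv : v + 2 ≤ #s)
    (hw : w + 2 ≤ #s) : Realizable s ((v + 1) :: (w + 1) :: l) := by
  obtain ⟨L, hL⟩ := h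
  obtain ⟨g, _, rfl, hgc, hT⟩ := List.map_eq_cons_iff.1 hL.map_cycleType
  obtain ⟨h, T, rfl, hhc, -⟩ := List.map_eq_cons_iff.1 hT
  obtain ⟨hg, hgcard⟩ := cycleType_eq_singleton_iff.1 hgc
  obtain ⟨hh, hhcard⟩ := cycleType_eq_singleton_iff.1 hhc
  obtain ⟨a, ha, y, hy, hay⟩ := exists_mem_mem_sdiff_iff_notMem
    (hL.support_subset h (by simp)) hg.nonempty_support hh.nonempty_support
    (by omega) (by omega)
  rw [mem_sdiff] at hy
  exact ⟨_, insert_eq_of_mem hy.1 ▸ hL.insert_swap ha hy.2 hay⟩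

theorem Realizable.insert_succ_succ {v w : ℕ} (h : Realizable s (v :: w :: l)) {q : α}
    (hq : q ∉ s) (hvw : #s < v + w + 2) : Realizable (insert q s) ((v + 1) :: (w + 1) :: l) := by
  obtain ⟨L, hL⟩ := h
  obtain ⟨g, _, rfl, hgc, hT⟩ := List.map_eq_cons_iff.1 hL.map_cycleType
  obtain ⟨h, T, rfl, hhc, -⟩ := List.map_eq_cons_iff.1 hT
  have hgs := hL.support_subset g (by simp)
  have hhs := hL.support_subset h (by simp)
  obtain ⟨a, ha⟩ := inter_nonempty_of_card_lt_card_add_card hgs hhs (by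
    rw [(cycleType_eq_singleton_iff.1 hgc).2, (cycleType_eq_singleton_iff.1 hhc).2]; omega)
  rw [mem_inter] at ha
  exact ⟨_, hL.insert_swap ha.1 (fun hq' => hq (hgs hq'))
    (iff_of_true ha.2 fun hq' => hq (hhs hq'))⟩

def IsAdmissible (m : ℕ) (l : List ℕ) : Prop :=
  (∀ x ∈ l, 1 ≤ x ∧ x < m) ∧ Even l.sum ∧ 2 * m ≤ l.sum + 2

theorem IsAdmissible.perm {m : ℕ} {l' : List ℕ} (h : IsAdmissible m l) (hp : l.Perm l') :
    IsAdmissible m l' :=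
  ⟨fun x hx => h.1 x (hp.mem_iff.2 hx), hp.sum_eq ▸ h.2.1, hp.sum_eq ▸ h.2.2⟩

variable (α) in
def RealizableBelow (N : ℕ) : Prop :=
  ∀ (s : Finset α) (l : List ℕ), l.sum + l.length < N → IsAdmissible #s l → Realizable s l

theorem realizable_of_le_add_of_two_le {u v w : ℕ} {rest : List ℕ}
    (ih : RealizableBelow α (u + v + w + rest.sum + rest.length + 3))
    (hl : IsAdmissible #s (u :: v :: w :: rest)) (huv : u ≤ v) (hvw : v ≤ w)
    (hvrest : ∀ x ∈ rest, v ≤ x) (hv : 2 ≤ v) (hm : #s ≤ u + v) :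
    Realizable s (u :: v :: w :: rest) := by
  obtain ⟨hbound, heven, hsum⟩ := hl
  simp only [List.mem_cons, forall_eq_or_imp] at hbound
  obtain ⟨hu, hv', hw', hrest⟩ := hbound
  simp only [Nat.even_iff, List.sum_cons] at heven hsum
  obtain ⟨v, rfl⟩ : ∃ v', v = v' + 1 := ⟨v - 1, by omega⟩
  obtain ⟨w, rfl⟩ : ∃ w', w = w' + 1 := ⟨w - 1, by omega⟩
  have hperm := List.perm_middle (a := u) (l₁ := [v + 1, w + 1]) (l₂ := rest)
  by_cases hbig : 2 * #s ≤ u + (v + 1 + (w + 1 + rest.sum))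
  · refine ((ih s (v :: w :: u :: rest) (by simp; omega) ⟨?_, ?_, ?_⟩).succ_succ
      (by omega) (by omega)).perm hperm
    · simpa [show 1 ≤ v by omega, show 1 ≤ w by omega, hu, show v < #s by omega,
        show w < #s by omega] using hrest
    · simp [Nat.even_iff]; omega
    · simp; omega
  rcases rest with _ | ⟨w', rest⟩
  · simp only [List.sum_nil, add_zero] at heven hsum hbig
    obtain ⟨q, hq⟩ := card_pos.1 (show 0 < #s by omega)
    have hcard := card_erase_of_mem hq
    refine insert_erase hq ▸ ((ih (s.erase q) [v, w, u] (by simp; omega) ⟨?_, ?_, ?_⟩)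
      |>.insert_succ_succ (notMem_erase q s) (by omega)).perm hperm
    · simp [hcard]; omega
    · simp [Nat.even_iff]; omega
    · simp [hcard]; omega
  -- a fourth entry would force `∑ l ≥ m + 2v ≥ 2m`
  · simp only [List.mem_cons, forall_eq_or_imp, List.sum_cons] at hvrest hbig hsum
    omega

theorem realizable_of_sorted (ih : RealizableBelow α (l.sum + l.length))
    (hl : IsAdmissible #s l) (hsorted : l.Pairwise (· ≤ ·)) : Realizable s l := by
  obtain ⟨hbound, heven, hsum⟩ := hl
  match l, hsorted, hbound with
  | [], _, _ => exact realizable_nil (by simp at hsum; omega)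
  | [u], _, hbound => simp at hbound hsum; omega
  | u :: v :: rest, hsorted, hbound =>
  simp only [List.pairwise_cons, List.mem_cons, forall_eq_or_imp] at hsorted
  obtain ⟨⟨huv, -⟩, hvrest, -⟩ := hsorted
  simp only [List.mem_cons, forall_eq_or_imp] at hbound
  obtain ⟨hu, hv, hrest⟩ := hbound
  simp only [Nat.even_iff, List.sum_cons, List.length_cons] at ih heven hsum
  by_cases hmerge : u + v < #s
  · refine (ih s ((u + v) :: rest) (by simp; omega) ⟨?_, ?_, ?_⟩).split hu.1 hv.1
    · simpa [hmerge, show 1 ≤ u + v by omega] using hrest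
    · simp [Nat.even_iff]; omega
    · simp; omega
  rcases rest with _ | ⟨w, rest⟩
  · obtain ⟨rfl, rfl⟩ : u = #s - 1 ∧ v = #s - 1 := by simp at hsum; omega
    exact realizable_pair (by omega)
  simp only [List.mem_cons, forall_eq_or_imp] at hrest hvrest
  simp only [List.sum_cons, List.length_cons] at ih heven hsum
  by_cases hv1 : v = 1
  · obtain ⟨rfl, rfl⟩ : u = 1 ∧ v = 1 := by omega
    obtain ⟨g, hg, hgs⟩ := exists_isCycle_support_eq (s := s) (by omega)
    refine (ih s (w :: rest) (by simp; omega) ⟨?_, ?_, ?_⟩).cons_cons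
      (by rw [hg.cycleType, hgs, show #s = 1 + 1 by omega]) hgs.le
    · simpa [hrest.1] using hrest.2
    · simp [Nat.even_iff]; omega
    · simp; omega
  exact realizable_of_le_add_of_two_le (fun s' l' hl' => ih s' l' (by omega))
    ⟨by simp_all, by simp [Nat.even_iff]; omega, by simp; omega⟩ huv hvrest.1 hvrest.2
    (by omega) (by omega)

theorem IsAdmissible.realizable (h : IsAdmissible #s l) : Realizable s l := by
  induction hN : l.sum + l.length using Nat.strong_induction_on generalizing s l with
  | _ N ih =>
  have hp := List.perm_insertionSort (· ≤ ·) l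
  refine (realizable_of_sorted (fun s' l' hl' h' => ih _ ?_ h' rfl)
    (h.perm hp.symm) (List.pairwise_insertionSort _ l)).perm hp
  rwa [hp.sum_eq, hp.length_eq, hN] at hl'

end Hurwitz

theorem hurwitz_realization_single_cycles_general
    (d k : ℕ)
    (n : Fin k → ℕ)
    (h1 : ∀ i, 1 ≤ n i) (hlt : ∀ i, n i < d)
    (heven : Even (∑ i, n i)) (hsum : 2 * d - 2 ≤ ∑ i, n i) :
    ∃ α : Fin k → Perm (Fin d),
      (∀ i, (α i).cycleType = {n i + 1}) ∧
      (List.ofFn α).prod = 1 ∧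
      (∀ x y : Fin d, ∃ σ ∈ Subgroup.closure (Set.range α), σ x = y) := by
  have hadm : Hurwitz.IsAdmissible #(univ : Finset (Fin d)) (List.ofFn n) := by
    refine ⟨fun x hx => ?_, by rwa [List.sum_ofFn], by
      rw [List.sum_ofFn, card_univ, Fintype.card_fin]; omega⟩
    obtain ⟨i, rfl⟩ := List.mem_ofFn.1 hx
    exact ⟨h1 i, by simpa using hlt i⟩
  obtain ⟨L, hL⟩ := hadm.realizable
  have hlen : L.length = k := by simpa using congrArg List.length hL.map_cycleType
  subst hlen
  refine ⟨fun i => L[(i : ℕ)], fun i => ?_, by rw [List.ofFn_getElem]; exact hL.prod_eq_one,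
    fun x y => ?_⟩
  · simpa using List.getElem_of_eq hL.map_cycleType (i := i) (by simp)
  · obtain ⟨σ, hσ, rfl⟩ := hL.exists_apply_eq x (mem_univ x) y (mem_univ y)
    refine ⟨σ, ?_, rfl⟩
    convert hσ using 2
    ext g
    simp [List.mem_iff_getElem, Fin.exists_iff]

theorem hurwitz_realization_single_cycles
    (d k : ℕ) (hd : 2 ≤ d)
    (n : Fin k → ℕ) (hmono : Monotone n)
    (h1 : ∀ i, 1 ≤ n i) (hlt : ∀ i, n i < d)
    (heven : Even (∑ i, n i)) (hsum : 2 * d - 2 ≤ ∑ i, n i) :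
    ∃ α : Fin k → Perm (Fin d),
      (∀ i, (α i).cycleType = {n i + 1}) ∧
      (List.ofFn α).prod = 1 ∧
      (∀ x y : Fin d, ∃ σ ∈ Subgroup.closure (Set.range α), σ x = y) :=
  hurwitz_realization_single_cycles_general d k n h1 hlt heven hsum
end

section
/- Every group homomorphism from the fundamental group of a closed orientable surface of genus g to the affine group Aff(ℂ) = {z ↦ az + b : a ∈ ℂ*, b ∈ ℂ} lifts to SL(2,ℂ), i.e., composing with the quotient SL(2,ℂ) → PSL(2,ℂ) recovers the embedding Aff(ℂ) ⊂ PSL(2,ℂ). -/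
open scoped commutatorElement

/-- The surface group relator `∏ i, [aᵢ, bᵢ]`. -/
def surfaceRelator (g : ℕ) : FreeGroup (Fin g ⊕ Fin g) :=
  (List.ofFn fun i : Fin g =>
    ⁅(FreeGroup.of (Sum.inl i) : FreeGroup (Fin g ⊕ Fin g)), FreeGroup.of (Sum.inr i)⁆).prod

/-- The fundamental group of the closed orientable surface of genus `g`. -/
def SurfaceGroup (g : ℕ) : Type := PresentedGroup ({surfaceRelator g} : Set (FreeGroup (Fin g ⊕ Fin g)))

instance (g : ℕ) : Group (SurfaceGroup g) := by unfold SurfaceGroup; infer_instance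


/-! Choose upper-triangular lifts in `SL(2,ℂ)` of the images of the generators. The top-left entry
is a homomorphism from the upper-triangular group to the abelian group `ℂˣ`, so the relator
`∏ [aᵢ, bᵢ]`, a product of commutators, is sent to a matrix with top-left entry `1`. Since `ρ` kills
the relator, this matrix is also central, hence scalar, hence `1`: the lifts satisfy the relation. -/

namespace Matrix.SpecialLinearGroup

variable (R : Type*) [CommRing R]

def upperTriangular : Subgroup (SpecialLinearGroup (Fin 2) R) where
  carrier := {A | A 1 0 = 0}
  one_mem' := by simp
  mul_mem' {A B} hA hB := by simp_all [coe_mul, Matrix.mul_apply, Fin.sum_univ_two]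
  inv_mem' {A} hA := by simp_all [coe_inv, Matrix.adjugate_fin_two]

variable {R}

lemma mul_apply_zero_zero_of_mem_upperTriangular {A B : SpecialLinearGroup (Fin 2) R}
    (hB : B ∈ upperTriangular R) : (A * B) 0 0 = A 0 0 * B 0 0 := by
  simp_all [upperTriangular, coe_mul, Matrix.mul_apply, Fin.sum_univ_two]

lemma apply_zero_zero_mul_apply_one_one_of_mem_upperTriangular {A : SpecialLinearGroup (Fin 2) R}
    (hA : A ∈ upperTriangular R) : A 0 0 * A 1 1 = 1 := by
  have hdet := A.det_coe
  rw [Matrix.det_fin_two] at hdet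
  simp_all [upperTriangular]

variable (R) in
def upperTriangularTopLeftHom : upperTriangular R →* Rˣ where
  toFun A := Units.mkOfMulEqOne _ _ (apply_zero_zero_mul_apply_one_one_of_mem_upperTriangular A.2)
  map_one' := by ext; simp
  map_mul' A B := by ext; exact mul_apply_zero_zero_of_mem_upperTriangular B.2

lemma eq_one_of_mem_center_of_apply_self_eq_one {n : Type*} [Fintype n] [DecidableEq n]
    {A : SpecialLinearGroup n R} (hA : A ∈ Subgroup.center (SpecialLinearGroup n R)) {i : n}
    (hi : A i i = 1) : A = 1 := by
  ext1
  rw [coe_one, ← scalar_eq_self_of_mem_center hA i, hi, map_one]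

end Matrix.SpecialLinearGroup

lemma map_surfaceRelator_eq_one {G : Type*} [CommGroup G] (g : ℕ)
    (φ : FreeGroup (Fin g ⊕ Fin g) →* G) : φ (surfaceRelator g) = 1 := by
  rw [surfaceRelator, map_list_prod, List.prod_eq_one]
  simp [map_commutatorElement, commutatorElement_eq_one_iff_mul_comm, mul_comm]

namespace PresentedGroup

variable {α H : Type*} [Group H] {N : Subgroup H} [N.Normal] {rels : Set (FreeGroup α)}
  {ρ : PresentedGroup rels →* H ⧸ N} {f : α → H}

lemma lift_mem_of_mem_rels (hf : ∀ a, (f a : H ⧸ N) = ρ (of a)) {r : FreeGroup α}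
    (hr : r ∈ rels) : FreeGroup.lift f r ∈ N := by
  have hcomp : (QuotientGroup.mk' N).comp (FreeGroup.lift f) = ρ.comp (mk rels) :=
    FreeGroup.ext_hom _ _ fun a => by simpa [of] using hf a
  rw [← QuotientGroup.eq_one_iff, ← QuotientGroup.mk'_apply, ← MonoidHom.comp_apply, hcomp,
    MonoidHom.comp_apply, one_of_mem hr, map_one]

lemma exists_lift_of_lift_rels (hf : ∀ a, (f a : H ⧸ N) = ρ (of a))
    (hrels : ∀ r ∈ rels, FreeGroup.lift f r = 1) :
    ∃ ρ' : PresentedGroup rels →* H, ∀ γ, (ρ' γ : H ⧸ N) = ρ γ :=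
  ⟨toGroup hrels, DFunLike.congr_fun (f := (QuotientGroup.mk' N).comp (toGroup hrels))
    (ext fun a => by simpa using hf a)⟩

end PresentedGroup

open Matrix.SpecialLinearGroup in
/-- Every representation of a closed surface group into `Aff(ℂ) ⊂ PSL(2,ℂ)` (classes of
upper-triangular matrices) lifts to `SL(2,ℂ)`. -/
theorem affine_representation_lifts_to_SL2
    (g : ℕ) (ρ : SurfaceGroup g →* PSL2C)
    (haff : ∀ γ : SurfaceGroup g, ∃ A : SL2C,
      (A : Matrix (Fin 2) (Fin 2) ℂ) 1 0 = 0 ∧ (QuotientGroup.mk A : PSL2C) = ρ γ) :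
    ∃ ρ' : SurfaceGroup g →* SL2C,
      ∀ γ : SurfaceGroup g, (QuotientGroup.mk (ρ' γ) : PSL2C) = ρ γ := by
  choose A hA hAρ using fun a => haff (PresentedGroup.of a)
  refine PresentedGroup.exists_lift_of_lift_rels hAρ ?_
  rintro r rfl
  let B : Fin g ⊕ Fin g → upperTriangular ℂ := fun a => ⟨A a, hA a⟩
  have hlift : FreeGroup.lift A = (upperTriangular ℂ).subtype.comp (FreeGroup.lift B) :=
    FreeGroup.ext_hom _ _ fun a => by simp [B]
  refine eq_one_of_mem_center_of_apply_self_eq_one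
    (PresentedGroup.lift_mem_of_mem_rels hAρ rfl) (i := 0) ?_
  have htopLeft := map_surfaceRelator_eq_one g ((upperTriangularTopLeftHom ℂ).comp (FreeGroup.lift B))
  rw [hlift]
  simpa [upperTriangularTopLeftHom, Units.ext_iff] using htopLeft
end

section
/- The action of the symplectic group Sp(2g, ℤ) on the set of surjective homomorphisms (ℤ/nℤ)-valued on ℤ^{2g} is transitive: for any n ≥ 2, any two surjective group homomorphisms ℤ^{2g} → ℤ/nℤ are related by precomposition with an element of Sp(2g, ℤ). -/
/-!
A homomorphism `f : ℤ^{2g} → ℤ/n` is the pairing with `a = (f eⱼ)ⱼ`, which is unimodular mod `n`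
when `f` is onto, and `f ∘ S` corresponds to `Sᵀ a`. Since `Sp(2g, ℤ)` is closed under transposes,
it suffices to carry every unimodular `a` to the first basis vector by integral symplectic matrices
acting mod `n`. Lift `a = (x, y)` to `ℤ^{2g}`: a Bézout matrix in `SL₂(ℤ)` on each coordinate plane
`(xᵢ, yᵢ)` kills `y`, so the new `x` is unimodular mod `n`. Then three shears `y ↦ y + C x`,
`x ↦ x + C y`, `y ↦ y + C x`, with `C` symmetric and supported on one row and column, make first
`y₀ = 1`, then `x = e₀`, then `y = 0`.
-/

open Matrix Function

theorem Int.exists_mul_sub_mul_eq_one_and_mul_add_mul_eq_zero (x y : ℤ) :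
    ∃ p q r s : ℤ, p * s - q * r = 1 ∧ r * x + s * y = 0 := by
  rcases (x.gcd y).eq_zero_or_pos with hd | hd
  · obtain ⟨rfl, rfl⟩ := Int.gcd_eq_zero_iff.1 hd
    exact ⟨1, 0, 0, 1, by ring, by ring⟩
  · obtain ⟨d, u, v, -, huv, rfl, rfl⟩ := Int.exists_gcd_one' hd
    obtain ⟨a, b, hab⟩ := Int.isCoprime_iff_gcd_eq_one.2 huv
    exact ⟨a, b, -v, u, by linear_combination hab, by ring⟩

theorem AddMonoidHom.apply_eq_sum_zsmul {ι M : Type*} [Fintype ι] [DecidableEq ι] [AddCommGroup M]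
    (f : (ι → ℤ) →+ M) (v : ι → ℤ) : f v = ∑ j, v j • f (Pi.single j 1) := by
  conv_lhs => rw [← Finset.univ_sum_single v]
  simp [map_sum, ← map_zsmul, ← Pi.single_smul]

namespace Matrix

theorem span_range_mulVec_le {m l R : Type*} [Fintype l] [CommRing R] (M : Matrix m l R)
    (v : l → R) : Ideal.span (Set.range (M *ᵥ v)) ≤ Ideal.span (Set.range v) := by
  refine Ideal.span_le.2 ?_
  rintro _ ⟨i, rfl⟩
  exact Ideal.sum_mem _ fun j _ => Ideal.mul_mem_left _ _ (Ideal.subset_span ⟨j, rfl⟩)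

variable {l R : Type*} [DecidableEq l] (i₀ : l)

def crossMatrix [Zero R] (c : l → R) : Matrix l l R :=
  of fun i j => if i = i₀ then c j else if j = i₀ then c i else 0

theorem crossMatrix_transpose [Zero R] (c : l → R) : (crossMatrix i₀ c)ᵀ = crossMatrix i₀ c := by
  ext i j
  by_cases hi : i = i₀ <;> by_cases hj : j = i₀ <;> simp [crossMatrix, hi, hj]

theorem crossMatrix_map {S : Type*} [Zero R] [Zero S] (f : R → S) (hf : f 0 = 0) (c : l → R) :
    (crossMatrix i₀ c).map f = crossMatrix i₀ (f ∘ c) := by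
  ext i j
  simp only [crossMatrix, map_apply, of_apply]
  split_ifs <;> simp [hf]

variable [Fintype l] [CommRing R]

theorem crossMatrix_mulVec_self (c x : l → R) : (crossMatrix i₀ c *ᵥ x) i₀ = c ⬝ᵥ x := by
  simp [crossMatrix, mulVec, dotProduct]

theorem crossMatrix_mulVec_of_ne (c x : l → R) {i : l} (hi : i ≠ i₀) :
    (crossMatrix i₀ c *ᵥ x) i = c i * x i₀ := by
  simp [crossMatrix, mulVec, dotProduct, hi]

theorem exists_crossMatrix_mulVec_eq {y : l → R} (hy : y i₀ = 1) (t : l → R) :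
    ∃ b, crossMatrix i₀ b *ᵥ y = t := by
  -- away from `i₀` the product is `b` itself; the correction at `i₀` fixes the `i₀` entry `b ⬝ᵥ y`
  refine ⟨t - (t ⬝ᵥ y - t i₀) • Pi.single i₀ 1, funext fun i => ?_⟩
  by_cases hi : i = i₀
  · subst hi
    simp [crossMatrix_mulVec_self, sub_dotProduct, single_dotProduct, hy]
  · simp [crossMatrix_mulVec_of_ne _ _ _ hi, hy, hi]

end Matrix

namespace SymplecticGroup

variable {l : Type*} [Fintype l] [DecidableEq l]

section CommRing

variable {R : Type*} [CommRing R]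

theorem fromBlocks_zero₁₂_mem {C : Matrix l l R} (hC : Cᵀ = C) :
    fromBlocks 1 0 C 1 ∈ symplecticGroup l R :=
  fromBlocks_mem_iff.2 ⟨by simp [hC], by simp, by simp⟩

theorem fromBlocks_zero₂₁_mem {B : Matrix l l R} (hB : Bᵀ = B) :
    fromBlocks 1 B 0 1 ∈ symplecticGroup l R :=
  fromBlocks_mem_iff.2 ⟨by simp, by simp [hB], by simp⟩

theorem fromBlocks_diagonal_mem {p q r s : l → R} (h : ∀ i, p i * s i - q i * r i = 1) :
    fromBlocks (diagonal p) (diagonal q) (diagonal r) (diagonal s) ∈ symplecticGroup l R := by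
  refine fromBlocks_mem_iff.2 ⟨?_, ?_, ?_⟩
  · simp [mul_comm]
  · simp [mul_comm]
  · simp only [diagonal_transpose, diagonal_mul_diagonal, diagonal_sub, mul_comm (r _), h,
      diagonal_one]

end CommRing

theorem exists_mulVec_comp_inr_eq_zero (x : l ⊕ l → ℤ) :
    ∃ S ∈ symplecticGroup l ℤ, (S *ᵥ x) ∘ Sum.inr = 0 := by
  choose p q r s hdet hr using fun i =>
    Int.exists_mul_sub_mul_eq_one_and_mul_add_mul_eq_zero (x (Sum.inl i)) (x (Sum.inr i))
  refine ⟨_, fromBlocks_diagonal_mem hdet, funext fun i => ?_⟩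
  simpa [fromBlocks_mulVec, mulVec_diagonal] using hr i

variable {n : ℕ}

def SpReaches (v w : l ⊕ l → ZMod n) : Prop :=
  ∃ S ∈ symplecticGroup l ℤ, S.map (Int.castRingHom (ZMod n)) *ᵥ v = w

theorem SpReaches.trans {u v w : l ⊕ l → ZMod n} (huv : SpReaches u v) (hvw : SpReaches v w) :
    SpReaches u w := by
  obtain ⟨S, hS, rfl⟩ := huv
  obtain ⟨T, hT, rfl⟩ := hvw
  exact ⟨T * S, mul_mem hT hS, by rw [Matrix.map_mul, mulVec_mulVec]⟩

theorem SpReaches.symm {v w : l ⊕ l → ZMod n} (h : SpReaches v w) : SpReaches w v := by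
  obtain ⟨S, hS, rfl⟩ := h
  let S' : symplecticGroup l ℤ := ⟨S, hS⟩
  have hS' : (↑S'⁻¹ : Matrix (l ⊕ l) (l ⊕ l) ℤ) * S = 1 := congrArg Subtype.val (inv_mul_cancel S')
  refine ⟨↑S'⁻¹, S'⁻¹.2, ?_⟩
  rw [mulVec_mulVec, ← Matrix.map_mul, hS', Matrix.map_one _ (map_zero _) (map_one _), one_mulVec]

theorem SpReaches.span_range_eq {v w : l ⊕ l → ZMod n} (h : SpReaches v w) :
    Ideal.span (Set.range w) = Ideal.span (Set.range v) := by
  refine le_antisymm ?_ ?_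
  · obtain ⟨S, -, rfl⟩ := h
    exact span_range_mulVec_le _ _
  · obtain ⟨T, -, rfl⟩ := h.symm
    exact span_range_mulVec_le _ _

theorem exists_spReaches_span_range_comp_inl_eq_top {a : l ⊕ l → ZMod n}
    (ha : Ideal.span (Set.range a) = ⊤) :
    ∃ w, SpReaches a w ∧ Ideal.span (Set.range (w ∘ Sum.inl)) = ⊤ := by
  obtain ⟨x, rfl⟩ := ZMod.intCast_surjective.comp_left a
  obtain ⟨S, hS, hSx⟩ := exists_mulVec_comp_inr_eq_zero x
  have haw : SpReaches (Int.cast ∘ x) (Int.cast ∘ (S *ᵥ x)) :=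
    ⟨S, hS, funext fun j => (RingHom.map_mulVec (Int.castRingHom (ZMod n)) S x j).symm⟩
  refine ⟨_, haw, top_le_iff.1 ?_⟩
  rw [← ha, ← haw.span_range_eq, Ideal.span_le]
  rintro _ ⟨i | i, rfl⟩
  · exact Ideal.subset_span ⟨i, rfl⟩
  · simp [show (S *ᵥ x) (Sum.inr i) = 0 from congrFun hSx i]

variable (i₀ : l)

theorem spReaches_shear_inr (c x y : l → ZMod n) :
    SpReaches (Sum.elim x y) (Sum.elim x (y + crossMatrix i₀ c *ᵥ x)) := by
  obtain ⟨c, rfl⟩ := ZMod.intCast_surjective.comp_left c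
  refine ⟨_, fromBlocks_zero₁₂_mem (crossMatrix_transpose i₀ c), ?_⟩
  simp [fromBlocks_map, crossMatrix_map _ _ Int.cast_zero, fromBlocks_mulVec, add_comm]

theorem spReaches_shear_inl (b x y : l → ZMod n) :
    SpReaches (Sum.elim x y) (Sum.elim (x + crossMatrix i₀ b *ᵥ y) y) := by
  obtain ⟨b, rfl⟩ := ZMod.intCast_surjective.comp_left b
  refine ⟨_, fromBlocks_zero₂₁_mem (crossMatrix_transpose i₀ b), ?_⟩
  simp [fromBlocks_map, crossMatrix_map _ _ Int.cast_zero, fromBlocks_mulVec]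

theorem spReaches_single_of_span_range_eq_top {a : l ⊕ l → ZMod n}
    (ha : Ideal.span (Set.range a) = ⊤) : SpReaches a (Pi.single (Sum.inl i₀) 1) := by
  obtain ⟨w, haw, hw⟩ := exists_spReaches_span_range_comp_inl_eq_top ha
  set x := w ∘ Sum.inl
  set y := w ∘ Sum.inr
  obtain ⟨c, hc⟩ : ∃ c, c ⬝ᵥ x = 1 - y i₀ :=
    Ideal.mem_span_range_iff_exists_fun.1 (hw ▸ Submodule.mem_top)
  set y₁ := y + crossMatrix i₀ c *ᵥ x
  have hy₁ : y₁ i₀ = 1 := by simp [y₁, crossMatrix_mulVec_self, hc]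
  obtain ⟨b, hb⟩ := exists_crossMatrix_mulVec_eq i₀ hy₁ (Pi.single i₀ 1 - x)
  obtain ⟨c', hc'⟩ := exists_crossMatrix_mulVec_eq i₀ (Pi.single_eq_same i₀ 1) (-y₁)
  have h₁ := spReaches_shear_inr i₀ c x y
  have h₂ := spReaches_shear_inl i₀ b x y₁
  have h₃ := spReaches_shear_inr i₀ c' (Pi.single i₀ 1) y₁
  rw [Sum.elim_comp_inl_inr] at h₁
  rw [hb, add_sub_cancel] at h₂
  rw [hc', add_neg_cancel] at h₃
  convert haw.trans (h₁.trans (h₂.trans h₃)) using 1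
  ext (j | j) <;> simp [Pi.single_apply]

end SymplecticGroup

theorem AddMonoidHom.exists_mem_symplecticGroup_apply_mulVec_eq {l : Type*} [Fintype l]
    [DecidableEq l] {n : ℕ} (i₀ : l) {f : (l ⊕ l → ℤ) →+ ZMod n} (hf : Surjective f) :
    ∃ S ∈ symplecticGroup l ℤ, ∀ v, f (S *ᵥ v) = v (Sum.inl i₀) := by
  set φ := Int.castRingHom (ZMod n)
  set a := fun j => f (Pi.single j 1)
  have hfa (v : l ⊕ l → ℤ) : f v = a ⬝ᵥ (φ ∘ v) := by
    simp [a, φ, f.apply_eq_sum_zsmul v, dotProduct, mul_comm]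
  have ha : Ideal.span (Set.range a) = ⊤ := by
    obtain ⟨u, hu⟩ := hf 1
    refine (Ideal.eq_top_iff_one _).2 (Ideal.mem_span_range_iff_exists_fun.2 ⟨φ ∘ u, ?_⟩)
    rw [← hu, hfa, dotProduct_comm]
    rfl
  obtain ⟨T, hT, hTa⟩ := SymplecticGroup.spReaches_single_of_span_range_eq_top i₀ ha
  refine ⟨Tᵀ, SymplecticGroup.transpose_mem hT, fun v => ?_⟩
  calc f (Tᵀ *ᵥ v) = a ⬝ᵥ ((T.map φ)ᵀ *ᵥ (φ ∘ v)) := by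
        rw [hfa, ← transpose_map]
        congr 1
        exact funext (RingHom.map_mulVec φ Tᵀ v)
    _ = (T.map φ *ᵥ a) ⬝ᵥ (φ ∘ v) := by rw [dotProduct_mulVec, vecMul_transpose]
    _ = v (Sum.inl i₀) := by rw [hTa, single_dotProduct, one_mul]; rfl

theorem symplectic_transitive_on_surjections_to_cyclic_general
    (g n : ℕ)
    (f₁ f₂ : ((Fin g ⊕ Fin g) → ℤ) →+ ZMod n)
    (h₁ : Function.Surjective f₁) (h₂ : Function.Surjective f₂) :
    ∃ M ∈ Matrix.symplecticGroup (Fin g) ℤ,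
      ∀ v : (Fin g ⊕ Fin g) → ℤ, f₂ v = f₁ (M.mulVec v) := by
  cases isEmpty_or_nonempty (Fin g) with
  | inl _ => exact ⟨1, one_mem _, fun v => by simp [Subsingleton.elim v 0]⟩
  | inr hg =>
    obtain ⟨i₀⟩ := hg
    obtain ⟨S₁, hS₁, hf₁⟩ := f₁.exists_mem_symplecticGroup_apply_mulVec_eq i₀ h₁
    obtain ⟨S₂, hS₂, hf₂⟩ := f₂.exists_mem_symplecticGroup_apply_mulVec_eq i₀ h₂
    set T : symplecticGroup (Fin g) ℤ := ⟨S₂, hS₂⟩⁻¹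
    have hT : S₂ * T = 1 := congrArg Subtype.val (mul_inv_cancel (⟨S₂, hS₂⟩ : symplecticGroup _ ℤ))
    refine ⟨S₁ * T, mul_mem hS₁ T.2, fun v => ?_⟩
    calc f₂ v = f₂ (S₂ *ᵥ (T *ᵥ v)) := by rw [mulVec_mulVec, hT, one_mulVec]
      _ = f₁ (S₁ *ᵥ (T *ᵥ v)) := by rw [hf₁, hf₂]
      _ = _ := by rw [mulVec_mulVec]

/-- The action of `Sp(2g, ℤ)` by precomposition on surjective homomorphisms
`ℤ^{2g} → ℤ/nℤ` is transitive. -/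
theorem symplectic_transitive_on_surjections_to_cyclic
    (g n : ℕ) (hn : 2 ≤ n)
    (f₁ f₂ : ((Fin g ⊕ Fin g) → ℤ) →+ ZMod n)
    (h₁ : Function.Surjective f₁) (h₂ : Function.Surjective f₂) :
    ∃ M ∈ Matrix.symplecticGroup (Fin g) ℤ,
      ∀ v : (Fin g ⊕ Fin g) → ℤ, f₂ v = f₁ (M.mulVec v) :=
  symplectic_transitive_on_surjections_to_cyclic_general g n f₁ f₂ h₁ h₂
end
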